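/- arXiv:1712.03224 — 3 statements merged into one kernel-verified Lean document; each statement's English description precedes it below -/
import Mathlib

section
/- In the follower-follower binary interaction w' = w + α P(w,w_*)(w_* - w) + ξ D_F(w), if w, w_* ∈ [-1,1], α ∈ (0,1), 0 ≤ P ≤ 1, 0 ≤ D_F ≤ 1, and the noise satisfies (1-α)F_- ≤ ξ ≤ (1-α)F_+ with F_± = min_{w: D_F(w)≠0} (1∓w)/D_F(w), then w' ∈ [-1,1]. -/
theorem follower_interaction_preserves_bounds
    (α : ℝ) (hα : α ∈ Set.Ioo (0 : ℝ) 1)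
    (P : ℝ → ℝ → ℝ) (hP : ∀ w wstar : ℝ, P w wstar ∈ Set.Icc (0 : ℝ) 1)
    (DF : ℝ → ℝ) (hDF : ∀ w : ℝ, DF w ∈ Set.Icc (0 : ℝ) 1)
    (Fp Fm : ℝ)
    (hFp : IsLeast {y : ℝ | ∃ w ∈ Set.Icc (-1 : ℝ) 1, DF w ≠ 0 ∧ y = (1 - w) / DF w} Fp)
    (hFm : IsLeast {y : ℝ | ∃ w ∈ Set.Icc (-1 : ℝ) 1, DF w ≠ 0 ∧ y = (1 + w) / DF w} Fm)
    (w wstar ξ : ℝ) (hw : w ∈ Set.Icc (-1 : ℝ) 1) (hws : wstar ∈ Set.Icc (-1 : ℝ) 1)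
    (hξl : (1 - α) * Fm ≤ ξ) (hξu : ξ ≤ (1 - α) * Fp) :
    w + α * P w wstar * (wstar - w) + ξ * DF w ∈ Set.Icc (-1 : ℝ) 1 := by
  obtain ⟨hα0, hα1⟩ := hα
  obtain ⟨hP0, hP1⟩ := hP w wstar
  obtain ⟨hD0, hD1⟩ := hDF w
  obtain ⟨hw1, hw2⟩ := hw
  obtain ⟨hs1, hs2⟩ := hws
  by_cases hd : DF w = 0
  · rw [hd]
    constructor <;> nlinarith [mul_nonneg hα0.le hP0, mul_le_one₀ hα1.le hP0 hP1]
  · have hdpos : 0 < DF w := lt_of_le_of_ne hD0 (Ne.symm hd)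
    have h1 : Fp ≤ (1 - w) / DF w := hFp.2 ⟨w, ⟨hw1, hw2⟩, hd, rfl⟩
    have h2 : Fm ≤ (1 + w) / DF w := hFm.2 ⟨w, ⟨hw1, hw2⟩, hd, rfl⟩
    have h1' : Fp * DF w ≤ 1 - w := by
      rw [← div_mul_cancel₀ (1 - w) (ne_of_gt hdpos)]
      exact mul_le_mul_of_nonneg_right h1 hD0
    have h2' : Fm * DF w ≤ 1 + w := by
      rw [← div_mul_cancel₀ (1 + w) (ne_of_gt hdpos)]
      exact mul_le_mul_of_nonneg_right h2 hD0
    have hup : ξ * DF w ≤ (1 - α) * (1 - w) := by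
      calc ξ * DF w ≤ (1 - α) * Fp * DF w :=
            mul_le_mul_of_nonneg_right hξu hD0
        _ = (1 - α) * (Fp * DF w) := by ring
        _ ≤ (1 - α) * (1 - w) := by
            apply mul_le_mul_of_nonneg_left h1' (by linarith)
    have hFm0 : 0 ≤ Fm := by
      obtain ⟨w0, ⟨hw01, hw02⟩, hne0, heq⟩ := hFm.1
      have : 0 < DF w0 := lt_of_le_of_ne (hDF w0).1 (Ne.symm hne0)
      rw [heq]
      exact div_nonneg (by linarith) this.le
    have hξ0 : 0 ≤ ξ := le_trans (by nlinarith) hξl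
    have hlo : 0 ≤ ξ * DF w := mul_nonneg hξ0 hD0
    constructor <;>
      nlinarith [mul_nonneg hα0.le hP0, mul_le_one₀ hα1.le hP0 hP1,
        mul_nonneg (mul_nonneg hα0.le hP0) (by linarith : (0:ℝ) ≤ 1 - wstar),
        mul_nonneg (mul_nonneg hα0.le (by linarith : (0:ℝ) ≤ 1 - P w wstar))
          (by linarith : (0:ℝ) ≤ 1 - w)]
end

section
/- In the follower-leader binary interaction w'' = w + α R(w,v)(v - w) + ξ D(w), if w, v ∈ [-1,1], α ∈ (0,1), 0 ≤ R ≤ 1, 0 ≤ D ≤ 1, and (1-α)L_- ≤ ξ ≤ (1-α)L_+ where L_± = min_{w: D(w)≠0} (1∓w)/D(w), then w'' ∈ [-1,1]. -/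
theorem follower_leader_interaction_preserves_bounds
    (α : ℝ) (hα : α ∈ Set.Ioo (0 : ℝ) 1)
    (R : ℝ → ℝ → ℝ) (hR : ∀ w v : ℝ, R w v ∈ Set.Icc (0 : ℝ) 1)
    (D : ℝ → ℝ) (hD : ∀ w : ℝ, D w ∈ Set.Icc (0 : ℝ) 1)
    (Lp Lm : ℝ)
    (hLp : IsLeast {y : ℝ | ∃ w ∈ Set.Icc (-1 : ℝ) 1, D w ≠ 0 ∧ y = (1 - w) / D w} Lp)
    (hLm : IsLeast {y : ℝ | ∃ w ∈ Set.Icc (-1 : ℝ) 1, D w ≠ 0 ∧ y = (1 + w) / D w} Lm)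
    (w v ξ : ℝ) (hw : w ∈ Set.Icc (-1 : ℝ) 1) (hv : v ∈ Set.Icc (-1 : ℝ) 1)
    (hξl : (1 - α) * Lm ≤ ξ) (hξu : ξ ≤ (1 - α) * Lp) :
    w + α * R w v * (v - w) + ξ * D w ∈ Set.Icc (-1 : ℝ) 1 := by
  obtain ⟨hα0, hα1⟩ := hα
  obtain ⟨hR0, hR1⟩ := hR w v
  obtain ⟨hD0, hD1⟩ := hD w
  obtain ⟨hw1, hw2⟩ := hw
  obtain ⟨hv1, hv2⟩ := hv
  by_cases hDz : D w = 0
  · constructor <;> rw [hDz] <;>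
      nlinarith [mul_nonneg (mul_nonneg hα0.le hR0) (by linarith : (0:ℝ) ≤ v + 1),
        mul_nonneg (mul_nonneg hα0.le hR0) (by linarith : (0:ℝ) ≤ 1 - v),
        mul_nonneg (by nlinarith : (0:ℝ) ≤ 1 - α * R w v) (by linarith : (0:ℝ) ≤ w + 1),
        mul_nonneg (by nlinarith : (0:ℝ) ≤ 1 - α * R w v) (by linarith : (0:ℝ) ≤ 1 - w)]
  · have hDpos : 0 < D w := lt_of_le_of_ne hD0 (Ne.symm hDz)
    have h1 : Lp ≤ (1 - w) / D w := hLp.2 ⟨w, ⟨hw1, hw2⟩, hDz, rfl⟩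
    have h2 : Lm ≤ (1 + w) / D w := hLm.2 ⟨w, ⟨hw1, hw2⟩, hDz, rfl⟩
    have h1' : Lp * D w ≤ 1 - w := by
      calc Lp * D w ≤ ((1 - w) / D w) * D w := by nlinarith
        _ = 1 - w := by field_simp
    have h2' : Lm * D w ≤ 1 + w := by
      calc Lm * D w ≤ ((1 + w) / D w) * D w := by nlinarith
        _ = 1 + w := by field_simp
    have hLm0 : 0 ≤ Lm := by
      obtain ⟨w0, ⟨hw01, hw02⟩, hDw0, hEq⟩ := hLm.1
      have : 0 < D w0 := lt_of_le_of_ne (hD w0).1 (Ne.symm hDw0)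
      rw [hEq]; exact div_nonneg (by linarith) this.le
    have hLp0 : 0 ≤ Lp := by
      obtain ⟨w0, ⟨hw01, hw02⟩, hDw0, hEq⟩ := hLp.1
      have : 0 < D w0 := lt_of_le_of_ne (hD w0).1 (Ne.symm hDw0)
      rw [hEq]; exact div_nonneg (by linarith) this.le
    constructor
    · nlinarith [mul_le_mul_of_nonneg_left hξl hD0,
        mul_nonneg (mul_nonneg (by linarith : (0:ℝ) ≤ 1 - α) hLm0) hD0,
        mul_nonneg (mul_nonneg hα0.le hR0) (by linarith : (0:ℝ) ≤ v + 1),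
        mul_nonneg (by nlinarith : (0:ℝ) ≤ 1 - α * R w v) (by linarith : (0:ℝ) ≤ w + 1)]
    · nlinarith [mul_le_mul_of_nonneg_left hξu hD0,
        mul_le_mul_of_nonneg_left h1' (by linarith : (0:ℝ) ≤ 1 - α),
        mul_nonneg (mul_nonneg hα0.le hR0) (by linarith : (0:ℝ) ≤ 1 - v),
        mul_nonneg (mul_nonneg hα0.le (by linarith : (0:ℝ) ≤ 1 - R w v)) (by linarith : (0:ℝ) ≤ 1 - w)]
end

section
/- The function f_∞(w) = γ (1+w)^{-2 + m/(2σ²)} (1-w)^{-2 - m/(2σ²)} exp( -(1 - m w)/(σ²(1 - w²)) ), with σ > 0, m ∈ (-1,1), solves on (-1,1) the stationary Fokker-Planck equation (m - w) f_∞(w) = (σ²/2) d/dw [ (1-w²)² f_∞(w) ]. -/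
/-!
On `(-1, 1)` one has `(1 - w²)² f_∞ = γ exp F` with
`F w = m / (2σ²) · (log (1 + w) - log (1 - w)) - (1 - m w) / (σ² (1 - w²))`,
and `F' = 2 (m - w) / (σ² (1 - w²)²)`. Hence
`σ²/2 · ((1 - w²)² f_∞)' = σ²/2 · F' · (1 - w²)² f_∞ = (m - w) f_∞`.
-/

open Real Set

theorem sq_mul_rpow_mul_rpow_eq_exp {a b : ℝ} (ha : 0 < a) (hb : 0 < b) (c : ℝ) :
    (a * b) ^ 2 * (a ^ (-2 + c) * b ^ (-2 - c)) = exp (c * (log a - log b)) := by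
  rw [rpow_def_of_pos ha, rpow_def_of_pos hb, ← exp_add, mul_pow,
    ← exp_log ha, ← exp_log hb, log_exp, log_exp, ← exp_nat_mul, ← exp_nat_mul, ← exp_add,
    ← exp_add]
  congr 1
  push_cast
  ring

noncomputable def stationaryPotential (σ m w : ℝ) : ℝ :=
  m / (2 * σ ^ 2) * (log (1 + w) - log (1 - w)) - (1 - m * w) / (σ ^ 2 * (1 - w ^ 2))

theorem hasDerivAt_stationaryPotential {σ : ℝ} (hσ : σ ≠ 0) (m : ℝ) {w : ℝ}
    (hw : w ∈ Ioo (-1 : ℝ) 1) :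
    HasDerivAt (stationaryPotential σ m) (2 * (m - w) / (σ ^ 2 * (1 - w ^ 2) ^ 2)) w := by
  obtain ⟨h1, h2⟩ := hw
  have hp : 1 + w ≠ 0 := by linarith
  have hq : 1 - w ≠ 0 := by linarith
  have hD : 1 - w ^ 2 ≠ 0 := by nlinarith
  have hlog := ((((hasDerivAt_id w).const_add 1).log hp).sub
    (((hasDerivAt_id w).const_sub 1).log hq)).const_mul (m / (2 * σ ^ 2))
  have hrat := (((hasDerivAt_id w).const_mul m).const_sub 1).div
    (((hasDerivAt_pow 2 w).const_sub 1).const_mul (σ ^ 2)) (mul_ne_zero (pow_ne_zero 2 hσ) hD)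
  refine (hlog.sub hrat).congr_deriv ?_
  simp only [id]
  field_simp
  ring

noncomputable def stationaryDensity (σ m γ w : ℝ) : ℝ :=
  γ * (1 + w) ^ (-2 + m / (2 * σ ^ 2)) * (1 - w) ^ (-2 - m / (2 * σ ^ 2)) *
    exp (-(1 - m * w) / (σ ^ 2 * (1 - w ^ 2)))

theorem one_sub_sq_sq_mul_stationaryDensity (σ m γ : ℝ) {w : ℝ} (hw : w ∈ Ioo (-1 : ℝ) 1) :
    (1 - w ^ 2) ^ 2 * stationaryDensity σ m γ w = γ * exp (stationaryPotential σ m w) := by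
  have hab := sq_mul_rpow_mul_rpow_eq_exp (a := 1 + w) (b := 1 - w) (by linarith [hw.1])
    (by linarith [hw.2]) (m / (2 * σ ^ 2))
  rw [stationaryPotential, exp_sub, ← hab, stationaryDensity, neg_div, exp_neg]
  ring

theorem hasDerivAt_one_sub_sq_sq_mul_stationaryDensity {σ : ℝ} (hσ : σ ≠ 0) (m γ : ℝ) {w : ℝ}
    (hw : w ∈ Ioo (-1 : ℝ) 1) :
    HasDerivAt (fun x => (1 - x ^ 2) ^ 2 * stationaryDensity σ m γ x)
      (2 * (m - w) / (σ ^ 2 * (1 - w ^ 2) ^ 2) * ((1 - w ^ 2) ^ 2 * stationaryDensity σ m γ w))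
      w := by
  have hexp := ((hasDerivAt_stationaryPotential hσ m hw).exp.const_mul γ).congr_of_eventuallyEq
    (Filter.eventually_of_mem (isOpen_Ioo.mem_nhds hw) fun x hx =>
      one_sub_sq_sq_mul_stationaryDensity σ m γ hx)
  rw [one_sub_sq_sq_mul_stationaryDensity σ m γ hw]
  exact hexp.congr_deriv (by ring)

theorem stationary_solution_solves_FP_general
    (σ m γ : ℝ) (hσ : 0 < σ)
    (f : ℝ → ℝ)
    (hf : ∀ w : ℝ, f w =
      γ * (1 + w) ^ (-2 + m / (2 * σ ^ 2)) * (1 - w) ^ (-2 - m / (2 * σ ^ 2)) *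
        Real.exp (-(1 - m * w) / (σ ^ 2 * (1 - w ^ 2)))) :
    ∀ w ∈ Set.Ioo (-1 : ℝ) 1,
      (m - w) * f w = σ ^ 2 / 2 * deriv (fun w => (1 - w ^ 2) ^ 2 * f w) w := by
  obtain rfl : f = stationaryDensity σ m γ := funext hf
  intro w hw
  have hD : 1 - w ^ 2 ≠ 0 := by nlinarith [hw.1, hw.2]
  rw [(hasDerivAt_one_sub_sq_sq_mul_stationaryDensity hσ.ne' m γ hw).deriv]
  field_simp

theorem stationary_solution_solves_FP
    (σ m γ : ℝ) (hσ : 0 < σ) (hm : m ∈ Set.Ioo (-1 : ℝ) 1) (hγ : 0 < γ)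
    (f : ℝ → ℝ)
    (hf : ∀ w : ℝ, f w =
      γ * (1 + w) ^ (-2 + m / (2 * σ ^ 2)) * (1 - w) ^ (-2 - m / (2 * σ ^ 2)) *
        Real.exp (-(1 - m * w) / (σ ^ 2 * (1 - w ^ 2)))) :
    ∀ w ∈ Set.Ioo (-1 : ℝ) 1,
      (m - w) * f w = σ ^ 2 / 2 * deriv (fun w => (1 - w ^ 2) ^ 2 * f w) w :=
  stationary_solution_solves_FP_general σ m γ hσ f hf
end
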